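/- Let K : ℝ^{d+1} × ℝ^{d+1} → ℝ be a strictly positive definite kernel and c : ℝ^d → ℝ any scale function. Then the variably scaled kernel K_c : ℝ^d × ℝ^d → ℝ defined by K_c(x,y) := K((x, c(x)), (y, c(y))) is strictly positive definite on ℝ^d. -/
import Mathlib


/-- A kernel `K : S × S → ℝ` is strictly positive definite if it is symmetric and
for every `N` and every tuple of pairwise distinct points `x : Fin N → S` the
Gram matrix `(K (x i) (x j))` is positive definite. -/
def IsStrictlyPosDefKernel {S : Type*} (K : S → S → ℝ) : Prop :=
  (∀ x y : S, K x y = K y x) ∧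
  ∀ (N : ℕ) (x : Fin N → S), Function.Injective x →
    (Matrix.of fun i j : Fin N => K (x i) (x j)).PosDef

/-- if `K` is a strictly positive definite kernel on `ℝ^{d+1}` and
`c : ℝ^d → ℝ` is any scale function, then the variably scaled kernel
`K_c(x,y) = K((x, c x), (y, c y))` is strictly positive definite on `ℝ^d`. -/
theorem variablyScaledKernel_isStrictlyPosDef (d : ℕ)
    (K : (Fin (d + 1) → ℝ) → (Fin (d + 1) → ℝ) → ℝ)
    (hK : IsStrictlyPosDefKernel K) (c : (Fin d → ℝ) → ℝ) :
    IsStrictlyPosDefKernel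
      (fun x y : Fin d → ℝ => K (Fin.snoc x (c x)) (Fin.snoc y (c y))) := by
  obtain ⟨hsym, hpd⟩ := hK
  refine ⟨fun x y => hsym _ _, fun N x hx => ?_⟩
  exact hpd N (fun i => Fin.snoc (x i) (c (x i))) (fun i j h => by
    apply hx
    have := congrArg Fin.init h
    simpa [Fin.init_snoc] using this)
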